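/- Let n be a positive integer and let (X,d,μ) be a proper geodesic metric measure space that is κ-doubling at scale R ∈ (0,∞). Then: (i) for every x ∈ X and every s > 0 the Θ-volume Θ_x(s) is finite, and the function (s,x) ↦ Θ_x(s) is continuous on (0,∞) × X; (ii) there exists a constant A > 0 depending only on n and κ such that Θ_x(s) ≤ A·μ(B_{√s}(x))/s^{n/2} for every x ∈ X and every s ∈ (0, R²]. -/

import Mathlib

open MeasureTheory Metric Filter Set
open scoped ENNReal

/-- `(X,d,μ)` is `κ`-doubling at scale `R ∈ (0,∞]`. -/
def DoublingAtScale {X : Type*} [MetricSpace X] [MeasurableSpace X] (μ : Measure X)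
    (κ : ℝ) (R : ℝ≥0∞) : Prop :=
  ∀ (x : X) (r : ℝ), 0 < r → ENNReal.ofReal r ≤ R →
    μ (ball x (2 * r)) ≤ ENNReal.ofReal κ * μ (ball x r)

/-- The measure is finite and nonzero on every ball of positive radius. -/
def BallMeasureNontrivial {X : Type*} [MetricSpace X] [MeasurableSpace X]
    (μ : Measure X) : Prop :=
  ∀ (x : X) (r : ℝ), 0 < r → 0 < μ (ball x r) ∧ μ (ball x r) < ⊤

/-- A metric space is geodesic: any two points are joined by a curve, parametrized
by arclength, whose length equals the distance between them. -/
def IsGeodesicSpace (X : Type*) [MetricSpace X] : Prop :=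
  ∀ x y : X, ∃ γ : ℝ → X, γ 0 = x ∧ γ (dist x y) = y ∧
    ∀ s ∈ Set.Icc (0 : ℝ) (dist x y), ∀ t ∈ Set.Icc (0 : ℝ) (dist x y),
      dist (γ s) (γ t) = |s - t|

/-- The `Θ`-volume `Θ_x(s) = (4πs)^{-n/2} ∫_X exp(−d(x,y)²/(4s)) dμ(y)`,
as an extended nonnegative real. -/
noncomputable def Theta {X : Type*} [MetricSpace X] [MeasurableSpace X] (μ : Measure X)
    (n : ℝ) (x : X) (s : ℝ) : ℝ≥0∞ :=
  ENNReal.ofReal ((4 * Real.pi * s) ^ (-(n / 2))) *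
    ∫⁻ y, ENNReal.ofReal (Real.exp (-(dist x y) ^ 2 / (4 * s))) ∂μ

/-! Doubling controls only balls of radius at most `R`; the geodesic property propagates it to all
scales. If `δ ≤ r` and `4δ ≤ R`, every `y ∈ B(x, r + δ)` has a point `z` on a geodesic from `x` to
`y` with `B(z, δ) ⊆ B(x, r) ∩ B(y, 3δ)`, and this ball carries a `κ⁻³` share of `μ(B(y, 4δ))`.
Integrating over `y` and exchanging the integrals, each `w ∈ B(x, r)` is counted with total weight
at most `κ²`, so `μ(B(x, r + δ)) ≤ κ⁵ μ(B(x, r))`; iterating,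
`μ(B(x, (k + 1) r)) ≤ κ^{20k} μ(B(x, r))` for `r ≤ R`. Summing the Gaussian over the shells
`k r ≤ d(x, ·) < (k + 1) r` and completing the square in `k` bounds `∫ exp(-d(x, y)² / 4s) dμ(y)`
by `2 exp((20 log κ + 1)² s / r²) μ(B(x, r))`: with `r = √s` this is (ii), with `r = R` it gives
finiteness, and continuity follows by dominated convergence. -/

namespace IsGeodesicSpace

variable {X : Type*} [MetricSpace X]

theorem exists_dist_eq_dist_eq (hX : IsGeodesicSpace X) (x y : X) {t : ℝ}
    (ht₀ : 0 ≤ t) (ht : t ≤ dist x y) : ∃ z, dist x z = t ∧ dist z y = dist x y - t := by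
  obtain ⟨γ, hγ₀, hγ₁, hγ⟩ := hX x y
  refine ⟨γ t, ?_, ?_⟩
  · rw [← hγ₀, hγ 0 ⟨le_rfl, dist_nonneg⟩ t ⟨ht₀, ht⟩, zero_sub, abs_neg, abs_of_nonneg ht₀]
  · conv_lhs => rw [← hγ₁]
    rw [hγ t ⟨ht₀, ht⟩ _ ⟨dist_nonneg, le_rfl⟩, abs_sub_comm, abs_of_nonneg (by linarith)]

theorem exists_dist_le_sub_of_dist_lt_add (hX : IsGeodesicSpace X) {x y : X}
    {r δ : ℝ} (hδ : 0 ≤ δ) (hδr : δ ≤ r) (hy : dist x y < r + δ) :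
    ∃ z, dist x z ≤ r - δ ∧ dist z y ≤ 2 * δ := by
  obtain ⟨z, hxz, hzy⟩ := hX.exists_dist_eq_dist_eq x y (le_max_right (dist x y - 2 * δ) 0)
    (max_le (by linarith [dist_nonneg (x := x) (y := y)]) dist_nonneg)
  refine ⟨z, ?_, ?_⟩
  · rw [hxz]; exact max_le (by linarith) (by linarith)
  · rw [hzy]; linarith [le_max_left (dist x y - 2 * δ) 0]

end IsGeodesicSpace

section Measure

variable {X : Type*} [MetricSpace X] [MeasurableSpace X] {μ : Measure X}

theorem BallMeasureNontrivial.isLocallyFiniteMeasure (h : BallMeasureNontrivial μ) :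
    IsLocallyFiniteMeasure μ :=
  ⟨fun x => ⟨ball x 1, ball_mem_nhds x one_pos, (h x 1 one_pos).2⟩⟩

theorem DoublingAtScale.measure_ball_two_pow_mul_le {κ R : ℝ}
    (hD : DoublingAtScale μ κ (ENNReal.ofReal R)) (x : X) {r : ℝ} (hr : 0 < r) :
    ∀ {k : ℕ}, 2 ^ k * r ≤ 2 * R → μ (ball x (2 ^ k * r)) ≤ ENNReal.ofReal κ ^ k * μ (ball x r)
  | 0, _ => by simp
  | k + 1, h => by
    have hk : 2 ^ k * r ≤ R := by rw [pow_succ] at h; linarith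
    have hpos : 0 < 2 ^ k * r := by positivity
    calc μ (ball x (2 ^ (k + 1) * r)) = μ (ball x (2 * (2 ^ k * r))) := by ring_nf
      _ ≤ ENNReal.ofReal κ * μ (ball x (2 ^ k * r)) :=
        hD x _ hpos (ENNReal.ofReal_le_ofReal hk)
      _ ≤ ENNReal.ofReal κ * (ENNReal.ofReal κ ^ k * μ (ball x r)) := by
        gcongr; exact hD.measure_ball_two_pow_mul_le x hr (by linarith)
      _ = ENNReal.ofReal κ ^ (k + 1) * μ (ball x r) := by ring

variable [OpensMeasurableSpace X] [SecondCountableTopology X]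

theorem measurable_measure_ball [SFinite μ] (t : ℝ) : Measurable fun y => μ (ball y t) :=
  measurable_measure_prodMk_left (s := {p : X × X | dist p.2 p.1 < t})
    (isOpen_lt (continuous_snd.dist continuous_fst) continuous_const).measurableSet

theorem measure_le_mul_of_forall_one_le_mul_measure_inter_ball [SFinite μ] {U S : Set X}
    {g : X → ℝ≥0∞} {ρ : ℝ} {b : ℝ≥0∞} (hU : MeasurableSet U) (hS : MeasurableSet S)
    (hg : Measurable g) (hgU : ∀ y ∈ U, 1 ≤ g y * μ (S ∩ ball y ρ))
    (hgS : ∀ w ∈ S, ∫⁻ y in ball w ρ, g y ∂μ ≤ b) :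
    μ U ≤ b * μ S := by
  set T := {p : X × X | p.2 ∈ S ∩ ball p.1 ρ}
  set F := T.indicator fun p => g p.1
  have hT : MeasurableSet T := (measurable_snd hS).inter
    (isOpen_lt (continuous_snd.dist continuous_fst) continuous_const).measurableSet
  have hF : Measurable F := (hg.comp measurable_fst).indicator hT
  have hrow : ∀ y, ∫⁻ w, F (y, w) ∂μ = g y * μ (S ∩ ball y ρ) := fun y => by
    rw [← lintegral_indicator_const (hS.inter measurableSet_ball)]
    rfl
  have hcol : ∀ w, ∫⁻ y, F (y, w) ∂μ = S.indicator (fun w => ∫⁻ y in ball w ρ, g y ∂μ) w := by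
    intro w
    by_cases hw : w ∈ S
    · rw [indicator_of_mem hw, ← lintegral_indicator measurableSet_ball]
      congr 1; ext y
      simp [F, T, indicator, hw, dist_comm]
    · simp [F, T, indicator, hw, dist_comm]
  calc μ U = ∫⁻ _ in U, 1 ∂μ := (setLIntegral_one U).symm
    _ ≤ ∫⁻ y in U, g y * μ (S ∩ ball y ρ) ∂μ := setLIntegral_mono' hU hgU
    _ ≤ ∫⁻ y, g y * μ (S ∩ ball y ρ) ∂μ := setLIntegral_le_lintegral _ _
    _ = ∫⁻ w, ∫⁻ y, F (y, w) ∂μ ∂μ := by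
      simp_rw [← hrow]; exact lintegral_lintegral_swap hF.aemeasurable
    _ = ∫⁻ w in S, ∫⁻ y in ball w ρ, g y ∂μ ∂μ := by
      simp_rw [hcol]; exact lintegral_indicator hS _
    _ ≤ ∫⁻ _ in S, b ∂μ := setLIntegral_mono' hS hgS
    _ = b * μ S := setLIntegral_const S b

end Measure

section Growth

variable {X : Type*} [MetricSpace X] [MeasurableSpace X] [OpensMeasurableSpace X]
  [SecondCountableTopology X] {μ : Measure X} {κ R : ℝ}

theorem measure_ball_add_le (hG : IsGeodesicSpace X) (hB : BallMeasureNontrivial μ)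
    (hD : DoublingAtScale μ κ (ENNReal.ofReal R)) {r δ : ℝ} (hδ : 0 < δ) (hδr : δ ≤ r)
    (hδR : 4 * δ ≤ R) (x : X) :
    μ (ball x (r + δ)) ≤ ENNReal.ofReal κ ^ 5 * μ (ball x r) := by
  have := hB.isLocallyFiniteMeasure
  have hball4 : ∀ y, 0 < μ (ball y (4 * δ)) ∧ μ (ball y (4 * δ)) < ⊤ := fun y =>
    hB y _ (by positivity)
  refine measure_le_mul_of_forall_one_le_mul_measure_inter_ball (ρ := 3 * δ)
    (g := fun y => ENNReal.ofReal κ ^ 3 / μ (ball y (4 * δ))) measurableSet_ball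
    measurableSet_ball (measurable_const.div (measurable_measure_ball _)) ?_ ?_
  · intro y hy
    rw [mem_ball, dist_comm] at hy
    obtain ⟨z, hxz, hzy⟩ := hG.exists_dist_le_sub_of_dist_lt_add hδ.le hδr hy
    have hsub : ball z δ ⊆ ball x r ∩ ball y (3 * δ) := fun w hw => by
      rw [mem_ball] at hw
      exact ⟨mem_ball.2 (by linarith [dist_triangle w z x, dist_comm x z]),
        mem_ball.2 (by linarith [dist_triangle w z y])⟩
    have hsup : ball y (4 * δ) ⊆ ball z (2 ^ 3 * δ) :=
      ball_subset_ball' (by linarith [dist_comm z y])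
    have hle : μ (ball y (4 * δ)) ≤ ENNReal.ofReal κ ^ 3 * μ (ball x r ∩ ball y (3 * δ)) :=
      calc μ (ball y (4 * δ)) ≤ μ (ball z (2 ^ 3 * δ)) := measure_mono hsup
        _ ≤ ENNReal.ofReal κ ^ 3 * μ (ball z δ) :=
          hD.measure_ball_two_pow_mul_le z hδ (by linarith)
        _ ≤ _ := by gcongr
    rw [← ENNReal.mul_div_right_comm, ENNReal.le_div_iff_mul_le (Or.inl (hball4 y).1.ne')
      (Or.inl (hball4 y).2.ne), one_mul]
    exact hle
  · intro w _
    have hinv : ∀ y ∈ ball w (3 * δ),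
        ENNReal.ofReal κ ^ 3 / μ (ball y (4 * δ)) ≤ ENNReal.ofReal κ ^ 3 / μ (ball w δ) :=
      fun y hy => ENNReal.div_le_div_left (measure_mono (ball_subset_ball' (by
        rw [mem_ball] at hy; linarith [dist_comm w y]))) _
    calc ∫⁻ y in ball w (3 * δ), ENNReal.ofReal κ ^ 3 / μ (ball y (4 * δ)) ∂μ
        ≤ ∫⁻ _ in ball w (3 * δ), ENNReal.ofReal κ ^ 3 / μ (ball w δ) ∂μ :=
          setLIntegral_mono' measurableSet_ball hinv
      _ = ENNReal.ofReal κ ^ 3 / μ (ball w δ) * μ (ball w (3 * δ)) := setLIntegral_const _ _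
      _ ≤ ENNReal.ofReal κ ^ 3 / μ (ball w δ) * (ENNReal.ofReal κ ^ 2 * μ (ball w δ)) := by
          gcongr
          exact (measure_mono (ball_subset_ball (by linarith))).trans
            (hD.measure_ball_two_pow_mul_le w hδ (by linarith))
      _ = ENNReal.ofReal κ ^ 5 := by
          rw [mul_comm, mul_assoc, ENNReal.mul_div_cancel (hB w δ hδ).1.ne' (hB w δ hδ).2.ne,
            ← pow_add]

theorem measure_ball_add_nat_mul_le (hG : IsGeodesicSpace X) (hB : BallMeasureNontrivial μ)
    (hD : DoublingAtScale μ κ (ENNReal.ofReal R)) {r δ : ℝ} (hδ : 0 < δ) (hδr : δ ≤ r)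
    (hδR : 4 * δ ≤ R) (x : X) (m : ℕ) :
    μ (ball x (r + m * δ)) ≤ ENNReal.ofReal κ ^ (5 * m) * μ (ball x r) := by
  induction m with
  | zero => simp
  | succ m ih =>
    calc μ (ball x (r + (m + 1 : ℕ) * δ)) = μ (ball x ((r + m * δ) + δ)) := by push_cast; ring_nf
      _ ≤ ENNReal.ofReal κ ^ 5 * μ (ball x (r + m * δ)) :=
        measure_ball_add_le hG hB hD hδ (by nlinarith [m.cast_nonneg (α := ℝ)]) hδR x
      _ ≤ ENNReal.ofReal κ ^ 5 * (ENNReal.ofReal κ ^ (5 * m) * μ (ball x r)) := by gcongr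
      _ = ENNReal.ofReal κ ^ (5 * (m + 1)) * μ (ball x r) := by ring

theorem measure_ball_nat_succ_mul_le (hG : IsGeodesicSpace X) (hB : BallMeasureNontrivial μ)
    (hD : DoublingAtScale μ κ (ENNReal.ofReal R)) {r : ℝ} (hr : 0 < r) (hrR : r ≤ R)
    (x : X) (k : ℕ) :
    μ (ball x ((k + 1) * r)) ≤ ENNReal.ofReal κ ^ (20 * k) * μ (ball x r) := by
  set δ := min r (R / 4)
  have hδ : 0 < δ := lt_min hr (by linarith)
  have hrδ : r / 4 ≤ δ := le_min (by linarith) (by linarith)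
  calc μ (ball x ((k + 1) * r)) ≤ μ (ball x (r + (4 * k : ℕ) * δ)) := by
        gcongr
        push_cast
        nlinarith [k.cast_nonneg (α := ℝ)]
    _ ≤ ENNReal.ofReal κ ^ (5 * (4 * k)) * μ (ball x r) :=
        measure_ball_add_nat_mul_le hG hB hD hδ (min_le_left _ _)
          (by linarith [min_le_right r (R / 4)]) x _
    _ = ENNReal.ofReal κ ^ (20 * k) * μ (ball x r) := by ring_nf

end Growth

theorem ENNReal.tsum_ofReal_exp_neg_nat_le_two :
    ∑' k : ℕ, ENNReal.ofReal (Real.exp (-k)) ≤ 2 := by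
  have hq : ENNReal.ofReal (Real.exp (-1)) ≤ 2⁻¹ := by
    rw [← ENNReal.ofReal_ofNat 2, ← ENNReal.ofReal_inv_of_pos two_pos]
    refine ENNReal.ofReal_le_ofReal ?_
    rw [Real.exp_neg, inv_le_inv₀ (Real.exp_pos 1) two_pos]
    linarith [Real.add_one_le_exp 1]
  calc ∑' k : ℕ, ENNReal.ofReal (Real.exp (-k))
      = ∑' k : ℕ, ENNReal.ofReal (Real.exp (-1)) ^ k := by
        congr 1; ext k
        rw [← ENNReal.ofReal_pow (Real.exp_pos _).le, ← Real.exp_nat_mul, mul_neg_one]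
    _ = (1 - ENNReal.ofReal (Real.exp (-1)))⁻¹ := ENNReal.tsum_geometric _
    _ ≤ (1 - 2⁻¹)⁻¹ := by gcongr
    _ = 2 := by rw [ENNReal.one_sub_inv_two, inv_inv]

theorem neg_sq_div_add_mul_le {r s : ℝ} (hr : 0 < r) (hs : 0 < s) (L k : ℝ) :
    -(k * r) ^ 2 / (4 * s) + L * k ≤ (L + 1) ^ 2 * s / r ^ 2 - k := by
  have key : (L + 1) ^ 2 * s / r ^ 2 - k - (-(k * r) ^ 2 / (4 * s) + L * k) =
      (2 * s * (L + 1) - k * r ^ 2) ^ 2 / (4 * s * r ^ 2) := by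
    field_simp; ring
  rw [← sub_nonneg, key]
  positivity

section Gaussian

variable {X : Type*} [MetricSpace X] [MeasurableSpace X] [OpensMeasurableSpace X]
  {μ : Measure X}

theorem lintegral_exp_neg_dist_sq_le_of_measure_ball_le {x : X} {r s L : ℝ} (hr : 0 < r)
    (hs : 0 < s)
    (hgrowth : ∀ k : ℕ,
      μ (ball x ((k + 1) * r)) ≤ ENNReal.ofReal (Real.exp (L * k)) * μ (ball x r)) :
    ∫⁻ y, ENNReal.ofReal (Real.exp (-(dist x y) ^ 2 / (4 * s))) ∂μ ≤
      ENNReal.ofReal (2 * Real.exp ((L + 1) ^ 2 * s / r ^ 2)) * μ (ball x r) := by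
  set shell : ℕ → X → ℝ≥0∞ := fun k =>
    (ball x ((k + 1) * r)).indicator fun _ => ENNReal.ofReal (Real.exp (-(k * r) ^ 2 / (4 * s)))
  have hpoint : ∀ y, ENNReal.ofReal (Real.exp (-(dist x y) ^ 2 / (4 * s))) ≤ ∑' k, shell k y := by
    intro y
    set k := ⌊dist x y / r⌋₊
    have hk : k * r ≤ dist x y := (le_div_iff₀ hr).1 (Nat.floor_le (by positivity))
    have hy : y ∈ ball x ((k + 1) * r) := by
      rw [mem_ball, dist_comm, ← div_lt_iff₀ hr]; exact Nat.lt_floor_add_one _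
    refine le_trans ?_ (ENNReal.le_tsum k)
    simp only [shell, indicator_of_mem hy]
    gcongr
  have hterm : ∀ k : ℕ, ENNReal.ofReal (Real.exp (-(k * r) ^ 2 / (4 * s))) *
      μ (ball x ((k + 1) * r)) ≤ ENNReal.ofReal (Real.exp ((L + 1) ^ 2 * s / r ^ 2)) *
        ENNReal.ofReal (Real.exp (-k)) * μ (ball x r) := fun k =>
    calc _ ≤ ENNReal.ofReal (Real.exp (-(k * r) ^ 2 / (4 * s))) *
          (ENNReal.ofReal (Real.exp (L * k)) * μ (ball x r)) := by gcongr; exact hgrowth k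
      _ = ENNReal.ofReal (Real.exp (-(k * r) ^ 2 / (4 * s) + L * k)) * μ (ball x r) := by
          rw [Real.exp_add, ENNReal.ofReal_mul (Real.exp_pos _).le, mul_assoc]
      _ ≤ ENNReal.ofReal (Real.exp ((L + 1) ^ 2 * s / r ^ 2 - k)) * μ (ball x r) := by
          gcongr; exact neg_sq_div_add_mul_le hr hs L k
      _ = _ := by rw [sub_eq_add_neg, Real.exp_add, ENNReal.ofReal_mul (Real.exp_pos _).le]
  calc ∫⁻ y, ENNReal.ofReal (Real.exp (-(dist x y) ^ 2 / (4 * s))) ∂μ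
      ≤ ∫⁻ y, ∑' k, shell k y ∂μ := lintegral_mono hpoint
    _ = ∑' k, ∫⁻ y, shell k y ∂μ :=
        lintegral_tsum fun k => (measurable_const.indicator measurableSet_ball).aemeasurable
    _ = ∑' k : ℕ, ENNReal.ofReal (Real.exp (-(k * r) ^ 2 / (4 * s))) *
          μ (ball x ((k + 1) * r)) := by
        simp only [shell, lintegral_indicator_const measurableSet_ball]
    _ ≤ ∑' k : ℕ, ENNReal.ofReal (Real.exp ((L + 1) ^ 2 * s / r ^ 2)) *
          ENNReal.ofReal (Real.exp (-k)) * μ (ball x r) := ENNReal.tsum_le_tsum hterm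
    _ = ENNReal.ofReal (Real.exp ((L + 1) ^ 2 * s / r ^ 2)) *
          (∑' k : ℕ, ENNReal.ofReal (Real.exp (-k))) * μ (ball x r) := by
        rw [ENNReal.tsum_mul_right, ENNReal.tsum_mul_left]
    _ ≤ ENNReal.ofReal (Real.exp ((L + 1) ^ 2 * s / r ^ 2)) * 2 * μ (ball x r) := by
        gcongr; exact ENNReal.tsum_ofReal_exp_neg_nat_le_two
    _ = _ := by rw [ENNReal.ofReal_mul zero_le_two, ENNReal.ofReal_ofNat, mul_comm 2]

end Gaussian

section Theta

variable {X : Type*} [MetricSpace X] [MeasurableSpace X] {μ : Measure X}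

theorem theta_le_div_rpow {n s : ℝ} (hn : 0 ≤ n) (hs : 0 < s) (x : X) {c : ℝ≥0∞}
    (h : ∫⁻ y, ENNReal.ofReal (Real.exp (-(dist x y) ^ 2 / (4 * s))) ∂μ ≤ c) :
    Theta μ n x s ≤ c / ENNReal.ofReal (s ^ (n / 2)) := by
  have hpre : (4 * Real.pi * s) ^ (-(n / 2)) ≤ s ^ (-(n / 2)) :=
    Real.rpow_le_rpow_of_nonpos hs (by nlinarith [Real.pi_gt_three]) (by linarith)
  calc Theta μ n x s ≤ ENNReal.ofReal (s ^ (-(n / 2))) * c := by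
        rw [Theta]; gcongr
    _ = c / ENNReal.ofReal (s ^ (n / 2)) := by
        rw [Real.rpow_neg hs.le, ENNReal.ofReal_inv_of_pos (by positivity), mul_comm,
          ← div_eq_mul_inv]

variable [OpensMeasurableSpace X]

theorem continuousOn_integral_exp_neg_dist_sq
    (hint : ∀ (x : X) (s : ℝ), 0 < s →
      Integrable (fun y => Real.exp (-(dist x y) ^ 2 / (4 * s))) μ) :
    ContinuousOn (fun p : ℝ × X => ∫ y, Real.exp (-(dist p.2 y) ^ 2 / (4 * p.1)) ∂μ)
      (Ioi 0 ×ˢ univ) := by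
  rintro ⟨t, x₀⟩ ⟨ht, -⟩
  rw [mem_Ioi] at ht
  refine ContinuousAt.continuousWithinAt (continuousAt_of_dominated
    (bound := fun y => Real.exp (1 / (8 * t)) * Real.exp (-(dist x₀ y) ^ 2 / (4 * (4 * t))))
    (Eventually.of_forall fun q => (by fun_prop : Continuous _).aestronglyMeasurable) ?_
    ((hint x₀ _ (by positivity)).const_mul _) (ae_of_all _ fun y => ?_))
  · filter_upwards [(isOpen_Ioo.prod isOpen_ball).mem_nhds
      (show (t, x₀) ∈ Ioo 0 (2 * t) ×ˢ ball x₀ 1 from ⟨⟨ht, by linarith⟩, mem_ball_self one_pos⟩)]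
      with ⟨s, x⟩ ⟨⟨hs, hst⟩, hx⟩
    refine ae_of_all _ fun y => ?_
    rw [Real.norm_of_nonneg (Real.exp_pos _).le, ← Real.exp_add, Real.exp_le_exp]
    have hd : dist x₀ y ≤ dist x y + 1 := by
      linarith [dist_triangle x₀ x y, dist_comm x x₀, mem_ball.1 hx]
    have hsq : dist x₀ y ^ 2 ≤ 2 * dist x y ^ 2 + 2 := by
      nlinarith [dist_nonneg (x := x₀) (y := y), sq_nonneg (dist x y - 1)]
    have h1 : dist x y ^ 2 / (8 * t) ≤ dist x y ^ 2 / (4 * s) :=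
      div_le_div_of_nonneg_left (sq_nonneg _) (by positivity) (by linarith)
    have h2 : dist x₀ y ^ 2 / (16 * t) ≤ (2 * dist x y ^ 2 + 2) / (16 * t) := by gcongr
    have h3 : (2 * dist x y ^ 2 + 2) / (16 * t) = dist x y ^ 2 / (8 * t) + 1 / (8 * t) := by
      field_simp; ring
    rw [neg_div, neg_div, show 4 * (4 * t) = 16 * t by ring]
    linarith
  · have : ContinuousAt (fun q : ℝ × X => -(dist q.2 y) ^ 2 / (4 * q.1)) (t, x₀) :=
      ContinuousAt.div (by fun_prop) (by fun_prop) (by positivity)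
    exact Real.continuous_exp.continuousAt.comp this

theorem theta_toReal_eq (n : ℝ) (x : X) {s : ℝ} (hs : 0 ≤ s) :
    (Theta μ n x s).toReal =
      (4 * Real.pi * s) ^ (-(n / 2)) * ∫ y, Real.exp (-(dist x y) ^ 2 / (4 * s)) ∂μ := by
  rw [Theta, ENNReal.toReal_mul, ENNReal.toReal_ofReal (by positivity),
    integral_eq_lintegral_of_nonneg_ae (ae_of_all _ fun _ => (Real.exp_pos _).le)
      (by fun_prop : Continuous _).aestronglyMeasurable]

theorem continuousOn_theta_toReal (n : ℝ)
    (hint : ∀ (x : X) (s : ℝ), 0 < s →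
      Integrable (fun y => Real.exp (-(dist x y) ^ 2 / (4 * s))) μ) :
    ContinuousOn (fun p : ℝ × X => (Theta μ n p.2 p.1).toReal) (Ioi 0 ×ˢ univ) := by
  refine ContinuousOn.congr ?_ fun p hp => theta_toReal_eq n p.2 (le_of_lt hp.1)
  refine ContinuousOn.mul ?_ (continuousOn_integral_exp_neg_dist_sq hint)
  exact ContinuousOn.rpow_const (by fun_prop) fun p hp =>
    Or.inl (by have : 0 < p.1 := hp.1; positivity)

end Theta

section Doubling

variable {X : Type*} [MetricSpace X] [MeasurableSpace X] [OpensMeasurableSpace X]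
  [SecondCountableTopology X] {μ : Measure X} {κ R : ℝ}

theorem lintegral_exp_neg_dist_sq_le (hG : IsGeodesicSpace X) (hB : BallMeasureNontrivial μ)
    (hD : DoublingAtScale μ κ (ENNReal.ofReal R)) (hκ : 0 < κ) {r s : ℝ} (hr : 0 < r)
    (hrR : r ≤ R) (hs : 0 < s) (x : X) :
    ∫⁻ y, ENNReal.ofReal (Real.exp (-(dist x y) ^ 2 / (4 * s))) ∂μ ≤
      ENNReal.ofReal (2 * Real.exp ((20 * Real.log κ + 1) ^ 2 * s / r ^ 2)) * μ (ball x r) :=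
  lintegral_exp_neg_dist_sq_le_of_measure_ball_le hr hs fun k => by
    rw [show 20 * Real.log κ * k = ((20 * k : ℕ) : ℝ) * Real.log κ by push_cast; ring,
      Real.exp_nat_mul, Real.exp_log hκ, ENNReal.ofReal_pow hκ.le]
    exact measure_ball_nat_succ_mul_le hG hB hD hr hrR x k

theorem lintegral_exp_neg_dist_sq_lt_top (hG : IsGeodesicSpace X) (hB : BallMeasureNontrivial μ)
    (hD : DoublingAtScale μ κ (ENNReal.ofReal R)) (hκ : 0 < κ) (hR : 0 < R) (x : X) {s : ℝ}
    (hs : 0 < s) :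
    ∫⁻ y, ENNReal.ofReal (Real.exp (-(dist x y) ^ 2 / (4 * s))) ∂μ < ⊤ :=
  (lintegral_exp_neg_dist_sq_le hG hB hD hκ hR le_rfl hs x).trans_lt
    (ENNReal.mul_lt_top ENNReal.ofReal_lt_top (hB x R hR).2)

theorem integrable_exp_neg_dist_sq (hG : IsGeodesicSpace X) (hB : BallMeasureNontrivial μ)
    (hD : DoublingAtScale μ κ (ENNReal.ofReal R)) (hκ : 0 < κ) (hR : 0 < R) (x : X) {s : ℝ}
    (hs : 0 < s) :
    Integrable (fun y => Real.exp (-(dist x y) ^ 2 / (4 * s))) μ :=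
  ⟨(by fun_prop : Continuous _).aestronglyMeasurable,
    (hasFiniteIntegral_iff_ofReal (ae_of_all _ fun _ => (Real.exp_pos _).le)).2
      (lintegral_exp_neg_dist_sq_lt_top hG hB hD hκ hR x hs)⟩

end Doubling

theorem theta_volume_finite_continuous_general (n : ℕ) (κ : ℝ) (hκ : 1 ≤ κ) :
    ∃ A : ℝ, 0 < A ∧
      ∀ (X : Type) [MetricSpace X] [MeasurableSpace X] [BorelSpace X]
        (μ : Measure X) (R : ℝ), 0 < R →
        ProperSpace X → BallMeasureNontrivial μ → IsGeodesicSpace X →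
        DoublingAtScale μ κ (ENNReal.ofReal R) →
        ((∀ (x : X) (s : ℝ), 0 < s → Theta μ n x s < ⊤) ∧
         ContinuousOn (fun p : ℝ × X => (Theta μ n p.2 p.1).toReal)
           (Set.Ioi (0 : ℝ) ×ˢ (Set.univ : Set X)) ∧
         (∀ (x : X) (s : ℝ), 0 < s → s ≤ R ^ 2 →
            Theta μ n x s ≤
              ENNReal.ofReal A * μ (ball x (Real.sqrt s)) /
                ENNReal.ofReal (s ^ ((n : ℝ) / 2)))) := by
  refine ⟨2 * Real.exp ((20 * Real.log κ + 1) ^ 2), by positivity,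
    fun X _ _ _ μ R hR _ hB hG hD => ⟨fun x s hs => ?_, ?_, fun x s hs hsR => ?_⟩⟩
  · exact ENNReal.mul_lt_top ENNReal.ofReal_lt_top
      (lintegral_exp_neg_dist_sq_lt_top hG hB hD (by linarith) hR x hs)
  · exact continuousOn_theta_toReal _ fun x s hs =>
      integrable_exp_neg_dist_sq hG hB hD (by linarith) hR x hs
  · have hsR' : √s ≤ R := (Real.sqrt_le_sqrt hsR).trans_eq (Real.sqrt_sq hR.le)
    refine theta_le_div_rpow n.cast_nonneg hs x <| (lintegral_exp_neg_dist_sq_le hG hB hD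
      (by linarith) (Real.sqrt_pos.2 hs) hsR' hs x).trans_eq ?_
    rw [Real.sq_sqrt hs.le, mul_div_assoc, div_self hs.ne', mul_one]

/-- On a proper geodesic space, `κ`-doubling at scale `R ∈ (0,∞)`: (i) `Θ_x(s)` is finite
and `(s,x) ↦ Θ_x(s)` is continuous on `(0,∞) × X`; (ii) there is `A > 0` depending only
on `n, κ` with `Θ_x(s) ≤ A·μ(B_{√s}(x))/s^{n/2}` for all `x` and `s ∈ (0,R²]`. -/
theorem theta_volume_finite_continuous (n : ℕ) (hn : 0 < n) (κ : ℝ) (hκ : 1 ≤ κ) :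
    ∃ A : ℝ, 0 < A ∧
      ∀ (X : Type) [MetricSpace X] [MeasurableSpace X] [BorelSpace X]
        (μ : Measure X) (R : ℝ), 0 < R →
        ProperSpace X → BallMeasureNontrivial μ → IsGeodesicSpace X →
        DoublingAtScale μ κ (ENNReal.ofReal R) →
        ((∀ (x : X) (s : ℝ), 0 < s → Theta μ n x s < ⊤) ∧
         ContinuousOn (fun p : ℝ × X => (Theta μ n p.2 p.1).toReal)
           (Set.Ioi (0 : ℝ) ×ˢ (Set.univ : Set X)) ∧
         (∀ (x : X) (s : ℝ), 0 < s → s ≤ R ^ 2 →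
            Theta μ n x s ≤
              ENNReal.ofReal A * μ (ball x (Real.sqrt s)) /
                ENNReal.ofReal (s ^ ((n : ℝ) / 2)))) :=
  theta_volume_finite_continuous_general n κ hκ
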